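/- The A^e-linear maps φ₀ and φ₁ defined by φ₀(ξ₀ ⊗_A x^i ξ₀) = Σ_{l=0}^{i−1} x^l ξ₁ x^{i−1−l}, φ₁(ξ₁ ⊗_A x^i ξ₀) = −δ_{i,p−1} ξ₂, and φ₁(ξ₀ ⊗_A x^i ξ₁) = δ_{i,p−1} ξ₂ satisfy the contracting-homotopy equation d_𝔸 ∘ φ + φ ∘ d_{𝔸⊗_A𝔸} = F in homological degrees 0 and 1 (with φ_{−1} = 0): explicitly, d₁∘φ₀ = F₀ on (𝔸⊗_A𝔸)₀ and d₂∘φ₁ + φ₀∘d_{(𝔸⊗_A𝔸)₁} = F₁ on (𝔸⊗_A𝔸)₁. -/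

import Mathlib

/-!
Setting: `k` a field of characteristic 0, `p > 2` an integer, `A = k[x]/(x^p)`,
`A^e = A ⊗ₖ A` (as `A` is commutative `A^op = A`), `u = x⊗1 - 1⊗x`,
`v = Σ_{i=0}^{p-1} x^i ⊗ x^{p-1-i}`, and `π : A^e → A` the multiplication map.
The complex `𝔸` has `𝔸ₙ = A^e` for `n ≥ 0`, with differential given by multiplication
by `u` in odd degrees and by `v` in even degrees, and augmentation `π`.
We write `ξₙ = 1 ⊗ 1` for the generator of `𝔸ₙ`, so that `x^i ξₙ x^j = x^i ⊗ x^j`.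
-/

open TensorProduct Polynomial

noncomputable section

variable (k : Type) [Field k] [CharZero k] (p : ℕ)

/-- `A = k[x]/(x^p)`. -/
abbrev Aq : Type := AdjoinRoot (X ^ p : k[X])

/-- `A^e = A ⊗ₖ A`. -/
abbrev Ae : Type := Aq k p ⊗[k] Aq k p

/-- The class of `x` in `A = k[x]/(x^p)`. -/
def xq : Aq k p := AdjoinRoot.root _

/-- `u = x ⊗ 1 - 1 ⊗ x ∈ A^e`. -/
def uE : Ae k p := xq k p ⊗ₜ 1 - 1 ⊗ₜ xq k p

/-- `v = Σ_{i=0}^{p-1} x^i ⊗ x^{p-1-i} ∈ A^e`. -/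
def vE : Ae k p := ∑ i ∈ Finset.range p, (xq k p ^ i) ⊗ₜ (xq k p ^ (p - 1 - i))

/-- The differential `dₙ : 𝔸ₙ → 𝔸ₙ₋₁` of the complex `𝔸`: multiplication by `u`
for `n` odd and by `v` for `n` even (`n ≥ 1`). -/
def dAn (n : ℕ) : Ae k p →ₗ[k] Ae k p :=
  LinearMap.mulLeft k (if n % 2 = 1 then uE k p else vE k p)

/-- The multiplication (augmentation) map `π : A^e → A`. -/
def piA : Ae k p →ₗ[k] Aq k p := LinearMap.mul' k (Aq k p)

/-!
The tensor square complex `𝔸 ⊗_A 𝔸`:  since `𝔸ᵢ ⊗_A 𝔸ⱼ ≅ A ⊗ₖ A ⊗ₖ A` (via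
`(a ⊗ b) ⊗_A (c ⊗ e) ↦ a ⊗ (b*c) ⊗ e`), we model the degree-`n` term
`(𝔸 ⊗_A 𝔸)ₙ = ⊕_{i+j=n} 𝔸ᵢ ⊗_A 𝔸ⱼ` as `Fin (n+1) → (A ⊗ₖ A) ⊗ₖ A`, the
component `i` corresponding to the summand `𝔸ᵢ ⊗_A 𝔸_{n-i}`.  Under this model
the left and right differentials become multiplication by the elements
`uL, vL, uR, vR` below, and the total differential `d(a ⊗_A b) = da ⊗_A b +
(-1)^{|a|} a ⊗_A db` is `dTot`.  The chain map `F = μ ⊗_A id - id ⊗_A μ`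
(where `μ` is `π` in degree 0 and `0` in positive degrees) becomes `FF`.
-/

/-- Model for `𝔸ᵢ ⊗_A 𝔸ⱼ`:  `(a⊗b) ⊗_A (c⊗e) ↦ (a ⊗ b*c) ⊗ e`. -/
abbrev TT : Type := Ae k p ⊗[k] Aq k p

/-- `u` acting through the left tensor factor: `x⊗1⊗1 - 1⊗x⊗1`. -/
def uL : TT k p := (uE k p) ⊗ₜ 1
/-- `v` acting through the left tensor factor. -/
def vL : TT k p := (vE k p) ⊗ₜ 1
/-- `u` acting through the right tensor factor: `1⊗x⊗1 - 1⊗1⊗x`. -/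
def uR : TT k p := ((1 : Aq k p) ⊗ₜ xq k p) ⊗ₜ 1 - ((1 : Aq k p) ⊗ₜ (1 : Aq k p)) ⊗ₜ xq k p
/-- `v` acting through the right tensor factor. -/
def vR : TT k p :=
  ∑ i ∈ Finset.range p, ((1 : Aq k p) ⊗ₜ (xq k p ^ i)) ⊗ₜ (xq k p ^ (p - 1 - i))

/-- Differential on the left tensor factor in degree `m`. -/
def eL (m : ℕ) : TT k p := if m % 2 = 1 then uL k p else vL k p
/-- Differential on the right tensor factor in degree `m`. -/
def eR (m : ℕ) : TT k p := if m % 2 = 1 then uR k p else vR k p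

/-- The total differential of the complex `𝔸 ⊗_A 𝔸`. -/
def dTot (n : ℕ) : (Fin (n + 1) → TT k p) →ₗ[k] (Fin n → TT k p) :=
  LinearMap.pi fun i => LinearMap.mulLeft k (eL k p (i + 1)) ∘ₗ LinearMap.proj i.succ
    + ((-1 : k) ^ (i : ℕ)) • (LinearMap.mulLeft k (eR k p (n - i)) ∘ₗ LinearMap.proj i.castSucc)

/-- `μ ⊗_A id` on the component `𝔸₀ ⊗_A 𝔸ₙ`:  `a ⊗ m ⊗ e ↦ (a*m) ⊗ e`. -/
def Lmap : TT k p →ₗ[k] Ae k p := (LinearMap.mul' k (Aq k p)).rTensor (Aq k p)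

/-- `id ⊗_A μ` on the component `𝔸ₙ ⊗_A 𝔸₀`:  `a ⊗ m ⊗ e ↦ a ⊗ (m*e)`. -/
def Rmap : TT k p →ₗ[k] Ae k p :=
  (LinearMap.mul' k (Aq k p)).lTensor (Aq k p) ∘ₗ
    (TensorProduct.assoc k (Aq k p) (Aq k p) (Aq k p)).toLinearMap

/-- The chain map `F = μ ⊗_A id - id ⊗_A μ : (𝔸 ⊗_A 𝔸)ₙ → 𝔸ₙ`. -/
def FF (n : ℕ) : (Fin (n + 1) → TT k p) →ₗ[k] Ae k p :=
  Lmap k p ∘ₗ LinearMap.proj 0 - Rmap k p ∘ₗ LinearMap.proj (Fin.last n)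

/-- The element `Σ_{a+b+c=p-2} x^a ξ ⊗_A x^b ξ x^c` appearing in the diagonal map. -/
def wElt : TT k p :=
  ∑ a ∈ Finset.range (p - 1), ∑ b ∈ Finset.range (p - 1 - a),
    ((xq k p ^ a) ⊗ₜ (xq k p ^ b)) ⊗ₜ (xq k p ^ (p - 2 - a - b))

/-- Component `i` of `Δₙ(ξₙ)`: it is `ξᵢ ⊗_A ξ_{n-i} = 1⊗1⊗1` except when `n` is even
and `i` is odd, where it is `Σ_{a+b+c=p-2} x^a ξᵢ ⊗_A x^b ξ_{n-i} x^c`. -/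
def dElt (n i : ℕ) : TT k p := if n % 2 = 0 ∧ i % 2 = 1 then wElt k p else 1

/-!
Write `X = x ⊗ 1` (`xOne`) and `Y = 1 ⊗ x` (`oneX`) in `A^e`, and
`G n = Σ_{l<n} X^l Y^{n-1-l}` (`geomSum`), so that
`u = X - Y`, `v = G p`, and `φ₀` sends the monomial `x^a ξ₀ ⊗_A x^i ξ₀ x^b` to `X^a Y^b G i`.
Both homotopy equations then reduce, monomial by monomial, to the geometric-sum identities
`(X - Y) G n = X^n - Y^n` and `G (n + 1) = X^n + Y G n`. The only subtlety is the top degree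
`i = p - 1`: there `φ₀` of the monomial `x^p = 0` vanishes instead of giving `X^a Y^b G p`,
and the missing term `X^a Y^b v` is exactly what `d₂ ∘ φ₁` contributes.
-/

section

omit [CharZero k]

def xOne : Ae k p := xq k p ⊗ₜ 1

def oneX : Ae k p := 1 ⊗ₜ xq k p

def geomSum (n : ℕ) : Ae k p := ∑ l ∈ Finset.range n, xOne k p ^ l * oneX k p ^ (n - 1 - l)

def monoTT (a i b : ℕ) : TT k p := ((xq k p ^ a) ⊗ₜ (xq k p ^ i)) ⊗ₜ (xq k p ^ b)

lemma xq_pow_eq_zero {n : ℕ} (h : p ≤ n) : xq k p ^ n = 0 :=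
  pow_eq_zero_of_le h (by rw [xq, ← AdjoinRoot.mk_X, ← map_pow, AdjoinRoot.mk_self])

lemma pow_tmul_pow (a b : ℕ) :
    (xq k p ^ a) ⊗ₜ[k] (xq k p ^ b) = xOne k p ^ a * oneX k p ^ b := by
  simp [xOne, oneX, Algebra.TensorProduct.tmul_pow, Algebra.TensorProduct.tmul_mul_tmul]

lemma xOne_pow_mul_oneX_pow_eq_zero {a b : ℕ} (h : p ≤ a ∨ p ≤ b) :
    xOne k p ^ a * oneX k p ^ b = 0 := by
  rw [← pow_tmul_pow]
  rcases h with h | h <;> simp [xq_pow_eq_zero k p h]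

lemma monoTT_eq_zero {a i b : ℕ} (h : p ≤ a ∨ p ≤ i ∨ p ≤ b) : monoTT k p a i b = 0 := by
  rcases h with h | h | h <;> simp [monoTT, xq_pow_eq_zero k p h]

lemma uE_eq : uE k p = xOne k p - oneX k p := rfl

lemma vE_eq_geomSum : vE k p = geomSum k p p := by
  simp [vE, geomSum, pow_tmul_pow]

lemma uE_mul_geomSum (n : ℕ) : uE k p * geomSum k p n = xOne k p ^ n - oneX k p ^ n :=
  (Commute.all _ _).mul_geom_sum₂ n

lemma geomSum_succ (n : ℕ) :
    geomSum k p (n + 1) = xOne k p ^ n + oneX k p * geomSum k p n := by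
  simpa [geomSum] using geom_sum₂_succ_eq (xOne k p) (oneX k p) (n := n)

lemma sum_pow_tmul_pow_eq (a i b : ℕ) :
    ∑ l ∈ Finset.range i, (xq k p ^ (a + l)) ⊗ₜ[k] (xq k p ^ (b + (i - 1 - l))) =
      xOne k p ^ a * oneX k p ^ b * geomSum k p i := by
  simp only [geomSum, Finset.mul_sum]
  exact Finset.sum_congr rfl fun _ _ => by rw [pow_tmul_pow, pow_add, pow_add]; ring

lemma uL_mul_monoTT (a i b : ℕ) :
    uL k p * monoTT k p a i b = monoTT k p (a + 1) i b - monoTT k p a (i + 1) b := by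
  simp [uL, uE, monoTT, sub_tmul, sub_mul, Algebra.TensorProduct.tmul_mul_tmul, ← pow_succ']

lemma uR_mul_monoTT (a i b : ℕ) :
    uR k p * monoTT k p a i b = monoTT k p a (i + 1) b - monoTT k p a i (b + 1) := by
  simp [uR, monoTT, sub_mul, Algebra.TensorProduct.tmul_mul_tmul, ← pow_succ']

lemma Lmap_monoTT (a i b : ℕ) :
    Lmap k p (monoTT k p a i b) = xOne k p ^ (a + i) * oneX k p ^ b := by
  rw [Lmap, monoTT, LinearMap.rTensor_tmul, LinearMap.mul'_apply, ← pow_add, pow_tmul_pow]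

lemma Rmap_monoTT (a i b : ℕ) :
    Rmap k p (monoTT k p a i b) = xOne k p ^ a * oneX k p ^ (i + b) := by
  rw [Rmap, monoTT, LinearMap.comp_apply, LinearEquiv.coe_coe, TensorProduct.assoc_tmul,
    LinearMap.lTensor_tmul, LinearMap.mul'_apply, ← pow_add, pow_tmul_pow]

lemma dTot_one_apply (g : Fin 2 → TT k p) :
    dTot k p 1 g = Pi.single 0 (uL k p * g 1 + uR k p * g 0) := by
  funext i
  fin_cases i
  simp [dTot, eL, eR]

lemma FF_apply (n : ℕ) (g : Fin (n + 1) → TT k p) :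
    FF k p n g = Lmap k p (g 0) - Rmap k p (g (Fin.last n)) := rfl

lemma linearMap_ext_monoTT {M : Type} [AddCommGroup M] [Module k M] {f g : TT k p →ₗ[k] M}
    (h : ∀ a < p, ∀ i < p, ∀ b < p, f (monoTT k p a i b) = g (monoTT k p a i b)) : f = g := by
  let B := (AdjoinRoot.powerBasis' (monic_X_pow (R := k) p)).basis
  refine ((B.tensorProduct B).tensorProduct B).ext fun ⟨⟨a, i⟩, b⟩ => ?_
  simpa [B, Module.Basis.tensorProduct_apply, PowerBasis.basis_eq_pow, xq, monoTT]
    using h a (by simpa using a.2) i (by simpa using i.2) b (by simpa using b.2)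

lemma apply_monoTT_of_lt {f : TT k p →ₗ[k] Ae k p} {i : ℕ} {c : Ae k p}
    (h : ∀ a < p, ∀ b < p, f (monoTT k p a i b) = xOne k p ^ a * oneX k p ^ b * c)
    (a b : ℕ) : f (monoTT k p a i b) = xOne k p ^ a * oneX k p ^ b * c := by
  by_cases hab : a < p ∧ b < p
  · exact h a hab.1 b hab.2
  · have hab' : p ≤ a ∨ p ≤ b := by omega
    rw [monoTT_eq_zero k p (by omega), map_zero, xOne_pow_mul_oneX_pow_eq_zero k p hab',
      zero_mul]

lemma dAn_one_comp_eq_FF_zero (phi0 : (Fin 1 → TT k p) →ₗ[k] Ae k p)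
    (h0 : ∀ a i b, i < p →
      phi0 (Pi.single 0 (monoTT k p a i b)) = xOne k p ^ a * oneX k p ^ b * geomSum k p i) :
    dAn k p 1 ∘ₗ phi0 = FF k p 0 := by
  refine LinearMap.pi_ext' fun j => linearMap_ext_monoTT k p fun a _ i hi b _ => ?_
  fin_cases j
  calc uE k p * phi0 (Pi.single 0 (monoTT k p a i b))
      = xOne k p ^ a * oneX k p ^ b * (uE k p * geomSum k p i) := by rw [h0 a i b hi]; ring
    _ = xOne k p ^ (a + i) * oneX k p ^ b - xOne k p ^ a * oneX k p ^ (i + b) := by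
      rw [uE_mul_geomSum]; ring
    _ = FF k p 0 (Pi.single 0 (monoTT k p a i b)) := by
      simp [FF_apply, Lmap_monoTT, Rmap_monoTT]

lemma dAn_two_comp_add_comp_dTot_one_eq_FF_one
    (phi0 : (Fin 1 → TT k p) →ₗ[k] Ae k p) (phi1 : (Fin 2 → TT k p) →ₗ[k] Ae k p)
    (h0 : ∀ a i b, i < p →
      phi0 (Pi.single 0 (monoTT k p a i b)) = xOne k p ^ a * oneX k p ^ b * geomSum k p i)
    (h1L : ∀ a i b, i < p → phi1 (Pi.single 1 (monoTT k p a i b)) =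
      xOne k p ^ a * oneX k p ^ b * -(if i = p - 1 then 1 else 0))
    (h1R : ∀ a i b, i < p → phi1 (Pi.single 0 (monoTT k p a i b)) =
      xOne k p ^ a * oneX k p ^ b * (if i = p - 1 then 1 else 0)) :
    dAn k p 2 ∘ₗ phi1 + phi0 ∘ₗ dTot k p 1 = FF k p 1 := by
  have phi0_succ : ∀ a i b, i < p →
      vE k p * (xOne k p ^ a * oneX k p ^ b * (if i = p - 1 then 1 else 0)) +
        phi0 (Pi.single 0 (monoTT k p a (i + 1) b)) =
      xOne k p ^ a * oneX k p ^ b * geomSum k p (i + 1) := by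
    intro a i b hi
    by_cases hip : i = p - 1
    · have hp : i + 1 = p := by omega
      rw [if_pos hip, monoTT_eq_zero k p (by omega), Pi.single_zero, map_zero, add_zero,
        vE_eq_geomSum, hp, mul_one, mul_comm]
    · rw [if_neg hip, mul_zero, mul_zero, zero_add, h0 a (i + 1) b (by omega)]
  refine LinearMap.pi_ext' fun j => linearMap_ext_monoTT k p fun a _ i hi b _ => ?_
  fin_cases j
  · calc vE k p * phi1 (Pi.single 0 (monoTT k p a i b)) +
          phi0 (dTot k p 1 (Pi.single 0 (monoTT k p a i b)))
        = vE k p * phi1 (Pi.single 0 (monoTT k p a i b)) +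
            phi0 (Pi.single 0 (monoTT k p a (i + 1) b)) -
          phi0 (Pi.single 0 (monoTT k p a i (b + 1))) := by
          simp [dTot_one_apply, uR_mul_monoTT, Pi.single_sub, add_sub_assoc]
      _ = xOne k p ^ a * oneX k p ^ b * (geomSum k p (i + 1) - oneX k p * geomSum k p i) := by
          rw [h1R a i b hi, phi0_succ a i b hi, h0 a i (b + 1) hi]; ring
      _ = xOne k p ^ (a + i) * oneX k p ^ b := by rw [geomSum_succ]; ring
      _ = FF k p 1 (Pi.single 0 (monoTT k p a i b)) := by simp [FF_apply, Lmap_monoTT]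
  · calc vE k p * phi1 (Pi.single 1 (monoTT k p a i b)) +
          phi0 (dTot k p 1 (Pi.single 1 (monoTT k p a i b)))
        = phi0 (Pi.single 0 (monoTT k p (a + 1) i b)) -
          (-(vE k p * phi1 (Pi.single 1 (monoTT k p a i b))) +
            phi0 (Pi.single 0 (monoTT k p a (i + 1) b))) := by
          rw [dTot_one_apply, Pi.single_eq_same, Pi.single_eq_of_ne zero_ne_one, mul_zero,
            add_zero, uL_mul_monoTT, Pi.single_sub, map_sub]
          ring
      _ = xOne k p ^ a * oneX k p ^ b *
            (xOne k p * geomSum k p i - geomSum k p (i + 1)) := by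
          rw [h1L a i b hi, mul_neg, mul_neg, neg_neg, phi0_succ a i b hi, h0 (a + 1) i b hi]; ring
      _ = -(xOne k p ^ a * oneX k p ^ (i + b)) := by
          rw [geomSum_succ]
          linear_combination xOne k p ^ a * oneX k p ^ b *
            (uE_mul_geomSum k p i - geomSum k p i * uE_eq k p)
      _ = FF k p 1 (Pi.single 1 (monoTT k p a i b)) := by simp [FF_apply, Rmap_monoTT]

end

/-- `φ₀, φ₁` are given by their values on the monomials `x^a ξ ⊗_A x^i ξ x^b` (`a, i, b < p`),
which encodes both the defining formulas and `A^e`-linearity; index `1` of `Fin 2` is the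
summand `𝔸₁ ⊗_A 𝔸₀`. -/
theorem phi_contracting_homotopy_for_F
    (phi0 : (Fin 1 → TT k p) →ₗ[k] Ae k p) (phi1 : (Fin 2 → TT k p) →ₗ[k] Ae k p)
    (Hphi0 : ∀ a < p, ∀ i < p, ∀ b < p,
      phi0 (Pi.single 0 (((xq k p ^ a) ⊗ₜ (xq k p ^ i)) ⊗ₜ (xq k p ^ b))) =
        ∑ l ∈ Finset.range i, (xq k p ^ (a + l)) ⊗ₜ (xq k p ^ (b + (i - 1 - l))))
    (Hphi1L : ∀ a < p, ∀ i < p, ∀ b < p,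
      phi1 (Pi.single 1 (((xq k p ^ a) ⊗ₜ (xq k p ^ i)) ⊗ₜ (xq k p ^ b))) =
        if i = p - 1 then -((xq k p ^ a) ⊗ₜ (xq k p ^ b)) else 0)
    (Hphi1R : ∀ a < p, ∀ i < p, ∀ b < p,
      phi1 (Pi.single 0 (((xq k p ^ a) ⊗ₜ (xq k p ^ i)) ⊗ₜ (xq k p ^ b))) =
        if i = p - 1 then (xq k p ^ a) ⊗ₜ (xq k p ^ b) else 0) :
    dAn k p 1 ∘ₗ phi0 = FF k p 0 ∧
    dAn k p 2 ∘ₗ phi1 + phi0 ∘ₗ dTot k p 1 = FF k p 1 := by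
  have h0 : ∀ a i b, i < p → phi0 (Pi.single 0 (monoTT k p a i b)) =
      xOne k p ^ a * oneX k p ^ b * geomSum k p i := fun a i b hi =>
    apply_monoTT_of_lt k p (f := phi0 ∘ₗ LinearMap.single k (fun _ ↦ TT k p) 0)
      (fun a ha b hb => (Hphi0 a ha i hi b hb).trans (sum_pow_tmul_pow_eq k p a i b)) a b
  have h1L : ∀ a i b, i < p → phi1 (Pi.single 1 (monoTT k p a i b)) =
      xOne k p ^ a * oneX k p ^ b * -(if i = p - 1 then 1 else 0) := fun a i b hi =>
    apply_monoTT_of_lt k p (f := phi1 ∘ₗ LinearMap.single k (fun _ ↦ TT k p) 1)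
      (fun a ha b hb => (Hphi1L a ha i hi b hb).trans (by split_ifs <;> simp [pow_tmul_pow])) a b
  have h1R : ∀ a i b, i < p → phi1 (Pi.single 0 (monoTT k p a i b)) =
      xOne k p ^ a * oneX k p ^ b * (if i = p - 1 then 1 else 0) := fun a i b hi =>
    apply_monoTT_of_lt k p (f := phi1 ∘ₗ LinearMap.single k (fun _ ↦ TT k p) 0)
      (fun a ha b hb => (Hphi1R a ha i hi b hb).trans (by split_ifs <;> simp [pow_tmul_pow])) a b
  exact ⟨dAn_one_comp_eq_FF_zero k p phi0 h0,
    dAn_two_comp_add_comp_dTot_one_eq_FF_one k p phi0 phi1 h0 h1L h1R⟩
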